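/- arXiv:1904.07675 — 2 statements merged into one kernel-verified Lean document; each statement's English description precedes it below -/
import Mathlib

section
/- With the Bernoulli-sequence model and the selfish-mining cycle length L, one has μ(L = 1) = p, μ(L = 2) = pq + pq², and for every integer n ≥ 3, μ(L = n) = p^{n−1}·q^n·C_{n−2}, where C_m = (2m)!/(m!·(m+1)!) is the m-th Catalan number. -/
open MeasureTheory ENNReal
open scoped BigOperators Classical

/-- The `n`-th Catalan number `C_n = (2n)! / (n! * (n+1)!)`, as a real number. -/
noncomputable def catalanC (n : ℕ) : ℝ :=
  (Nat.factorial (2 * n) : ℝ) / ((Nat.factorial n : ℝ) * (Nat.factorial (n + 1) : ℝ))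

/-- Blocks are labelled by `Bool`: `true` = `S` (selfish/attacker block),
`false` = `H` (honest block). The walk `W k = #{i < k : X_i = S} - #{i < k : X_i = H}`. -/
def walkW (ω : ℕ → Bool) (k : ℕ) : ℤ :=
  (((Finset.range k).filter fun i => ω i = true).card : ℤ) -
    (((Finset.range k).filter fun i => ω i = false).card : ℤ)

/-- The selfish-mining cycle length `L : Ω → ℕ∞` : `L = 1` if `X_0 = H`; `L = 2` if
`X_0 = S, X_1 = H`; and if `X_0 = X_1 = S`, `L = (σ + 1) / 2` where
`σ = inf {k ≥ 2 : W k = 1}`, with `L = ∞` if no such `k` exists. -/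
noncomputable def smL (ω : ℕ → Bool) : ℕ∞ :=
  if ω 0 = false then 1
  else if ω 1 = false then 2
  else if _h : {k : ℕ | 2 ≤ k ∧ walkW ω k = 1}.Nonempty then
    (((sInf {k : ℕ | 2 ≤ k ∧ walkW ω k = 1} + 1) / 2 : ℕ) : ℕ∞)
  else ⊤

/-! If `X₀ = X₁ = S`, the walk `W` is at height 2 at time 2, and `L = m + 2` means that it first
returns to height 1 at time `2m + 3`. Stripping the two leading `S` and the final `H`, the block
sequences of such a first passage are exactly the Dyck words of semilength `m`, with `S` as the
up-step. So `{L = m + 2, X₁ = S}` is a disjoint union of `C_m` cylinders of length `2m + 3`, each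
with `m + 2` blocks `S` and `m + 1` blocks `H`; the cases `L = 1` and `L = 2, X₁ = H` are single
cylinders. -/

open DyckStep

def lead (l : List Bool) : ℤ := (l.count true : ℤ) - l.count false

@[simp] lemma lead_nil : lead [] = 0 := by simp [lead]

@[simp] lemma lead_cons (b : Bool) (l : List Bool) :
    lead (b :: l) = lead l + if b then 1 else -1 := by
  cases b <;> simp only [lead, List.count_cons_self, List.count_cons_of_ne, ne_eq,
    Bool.true_eq_false, Bool.false_eq_true, not_false_eq_true, Nat.cast_add, Nat.cast_one,
    ↓reduceIte] <;> ring

@[simp] lemma lead_append (l l' : List Bool) : lead (l ++ l') = lead l + lead l' := by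
  simp only [lead, List.count_append]; push_cast; ring

lemma lead_add_two_mul_count_false (l : List Bool) :
    lead l + 2 * l.count false = l.length := by
  rw [lead, ← List.count_true_add_count_false]; push_cast; ring

lemma sub_one_le_lead_take_succ (l : List Bool) (k : ℕ) :
    lead (l.take k) - 1 ≤ lead (l.take (k + 1)) := by
  rw [List.take_add, lead_append]
  rcases l.drop k with _ | ⟨b, _⟩
  · simp
  · simp only [List.take_succ_cons, List.take_zero, lead_cons, lead_nil]
    split_ifs <;> linarith

lemma walkW_eq_lead (ω : ℕ → Bool) (k : ℕ) : walkW ω k = lead ((List.range k).map ω) := by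
  induction k with
  | zero => simp [walkW]
  | succ k ih =>
    rw [List.range_succ, List.map_append, lead_append, ← ih]
    simp only [walkW, Finset.range_add_one, Finset.filter_insert]
    have hk : k ∉ (Finset.range k).filter fun i => ω i = ω k := by simp
    cases h : ω k <;> simp only [h, ↓reduceIte, Bool.true_eq_false, Bool.false_eq_true,
      Finset.card_insert_of_notMem (h ▸ hk), List.map_cons, List.map_nil, lead_cons, lead_nil,
      Nat.cast_add, Nat.cast_one] <;> ring

lemma lead_take_map_range (ω : ℕ → Bool) {k n : ℕ} (h : k ≤ n) :
    lead (((List.range n).map ω).take k) = walkW ω k := by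
  rw [← List.map_take, List.take_range, min_eq_left h, walkW_eq_lead]

lemma odd_of_walkW_eq_one {ω : ℕ → Bool} {k : ℕ} (h : walkW ω k = 1) : Odd k := by
  have := lead_add_two_mul_count_false ((List.range k).map ω)
  rw [← walkW_eq_lead, h, List.length_map, List.length_range] at this
  exact ⟨((List.range k).map ω).count false, by omega⟩

lemma walkW_two {ω : ℕ → Bool} (h0 : ω 0 = true) (h1 : ω 1 = true) : walkW ω 2 = 2 := by
  simp [walkW_eq_lead, List.range_succ, h0, h1]

lemma lt_of_forall_ne_of_sub_one_le {f : ℕ → ℤ} {c : ℤ} {a b : ℕ}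
    (hf : ∀ k, f k - 1 ≤ f (k + 1)) (ha : c < f a) (hne : ∀ k, a ≤ k → k < b → f k ≠ c) :
    ∀ k, a ≤ k → k < b → c < f k := by
  refine Nat.le_induction (fun _ => ha) fun k hak ih hkb => ?_
  have hk1 := hne (k + 1) (by omega) hkb
  have hstep := hf k
  have hk := ih (by omega)
  omega

def DyckStep.equivBool : DyckStep ≃ Bool where
  toFun s := s = U
  invFun b := if b then U else D
  left_inv s := by cases s <;> rfl
  right_inv b := by cases b <;> rfl

lemma count_true_map_equivBool (l : List DyckStep) : (l.map equivBool).count true = l.count U :=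
  List.count_map_of_injective l _ equivBool.injective U

lemma count_false_map_equivBool (l : List DyckStep) : (l.map equivBool).count false = l.count D :=
  List.count_map_of_injective l _ equivBool.injective D

lemma lead_map_equivBool (l : List DyckStep) :
    lead (l.map equivBool) = l.count U - l.count D := by
  rw [lead, count_true_map_equivBool, count_false_map_equivBool]

def cyclePath (d : DyckWord) : List Bool := true :: true :: d.toList.map equivBool ++ [false]

lemma length_cyclePath (d : DyckWord) : (cyclePath d).length = 2 * d.semilength + 3 := by
  simp [cyclePath, d.two_mul_semilength_eq_length]

lemma count_true_cyclePath (d : DyckWord) : (cyclePath d).count true = d.semilength + 2 := by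
  simp [cyclePath, count_true_map_equivBool, DyckWord.semilength]

lemma count_false_cyclePath (d : DyckWord) : (cyclePath d).count false = d.semilength + 1 := by
  simp [cyclePath, count_false_map_equivBool, d.semilength_eq_count_D]

lemma lead_cyclePath (d : DyckWord) : lead (cyclePath d) = 1 := by
  simp [cyclePath, lead_map_equivBool, d.count_U_eq_count_D]

lemma one_lt_lead_take_cyclePath (d : DyckWord) {k : ℕ} (hk2 : 2 ≤ k)
    (hk : k < (cyclePath d).length) : 1 < lead ((cyclePath d).take k) := by
  obtain ⟨j, rfl⟩ : ∃ j, k = j + 2 := ⟨k - 2, by omega⟩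
  have hj : j ≤ (d.toList.map equivBool).length := by
    rw [length_cyclePath] at hk
    rw [List.length_map, ← d.two_mul_semilength_eq_length]
    omega
  have hprefix := d.count_D_le_count_U j
  have hlead := lead_map_equivBool (d.toList.take j)
  rw [List.map_take] at hlead
  simp only [cyclePath, List.cons_append, List.take_succ_cons, List.take_append_of_le_length hj,
    lead_cons, hlead, ↓reduceIte]
  omega

lemma exists_cyclePath_of_lead {s : List Bool} (h2 : s.take 2 = [true, true])
    (hne : ∀ k, 2 ≤ k → k < s.length → lead (s.take k) ≠ 1) (h1 : lead s = 1) :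
    ∃ d, cyclePath d = s := by
  have hgt : ∀ k, 2 ≤ k → k < s.length → 1 < lead (s.take k) :=
    lt_of_forall_ne_of_sub_one_le (sub_one_le_lead_take_succ s) (by simp [h2]) hne
  obtain ⟨t, rfl⟩ : ∃ t, s = true :: true :: t :=
    ⟨s.drop 2, by simpa [h2] using (List.take_append_drop 2 s).symm⟩
  obtain rfl | ⟨u, x, rfl⟩ := t.eq_nil_or_concat'
  · simp at h1
  obtain ⟨l, rfl⟩ : ∃ l : List DyckStep, u = l.map equivBool := ⟨u.map equivBool.symm, by simp⟩
  have hprefix (i : ℕ) (hi : i ≤ l.length) :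
      1 < 2 + ((l.take i).count U - (l.take i).count D : ℤ) := by
    have := hgt (i + 2) (by omega) <| by
      simp only [List.length_cons, List.length_append, List.length_map, List.length_nil]
      omega
    rw [← lead_map_equivBool, List.map_take]
    simp only [List.take_succ_cons, List.take_append_of_le_length (l₁ := l.map equivBool)
      (by simpa using hi), lead_cons, ↓reduceIte] at this
    omega
  have hl := hprefix l.length le_rfl
  rw [List.take_length] at hl
  rw [lead_cons, lead_cons, lead_append, lead_map_equivBool] at h1
  cases x
  case true =>
    simp only [lead_cons, lead_nil, ↓reduceIte] at h1
    omega
  have hU : l.count U = l.count D := by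
    simp only [lead_cons, lead_nil, Bool.false_eq_true, ↓reduceIte] at h1
    omega
  refine ⟨⟨l, hU, fun i => ?_⟩, rfl⟩
  by_cases hi : i ≤ l.length
  · have := hprefix i hi
    omega
  · rw [List.take_of_length_le (by omega), hU]

lemma exists_cyclePath_iff {s : List Bool} :
    (∃ d, cyclePath d = s) ↔
      s.take 2 = [true, true] ∧ (∀ k, 2 ≤ k → k < s.length → lead (s.take k) ≠ 1) ∧
        lead s = 1 := by
  constructor
  · rintro ⟨d, rfl⟩
    exact ⟨rfl, fun k hk2 hk => (one_lt_lead_take_cyclePath d hk2 hk).ne', lead_cyclePath d⟩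
  · rintro ⟨h2, hne, h1⟩
    exact exists_cyclePath_of_lead h2 hne h1

def cyclePaths (m : ℕ) : Finset (List Bool) :=
  Finset.univ.image fun d : {d : DyckWord // d.semilength = m} => cyclePath d

lemma cyclePath_injective : Function.Injective cyclePath := fun d d' h =>
  DyckWord.ext <| List.map_injective_iff.2 equivBool.injective <| by simpa [cyclePath] using h

lemma card_cyclePaths (m : ℕ) : (cyclePaths m).card = catalan m := by
  rw [cyclePaths,
    Finset.card_image_of_injective _ fun d d' h => Subtype.ext (cyclePath_injective h),
    Finset.card_univ, DyckWord.card_dyckWord_semilength_eq_catalan]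

lemma mem_cyclePaths {m : ℕ} {s : List Bool} :
    s ∈ cyclePaths m ↔ s.length = 2 * m + 3 ∧ ∃ d, cyclePath d = s := by
  simp only [cyclePaths, Finset.mem_image, Finset.mem_univ, true_and, Subtype.exists]
  constructor
  · rintro ⟨d, rfl, rfl⟩
    exact ⟨length_cyclePath d, d, rfl⟩
  · rintro ⟨hs, d, rfl⟩
    rw [length_cyclePath] at hs
    exact ⟨d, by omega, rfl⟩

lemma map_range_mem_cyclePaths_iff (ω : ℕ → Bool) (m : ℕ) :
    (List.range (2 * m + 3)).map ω ∈ cyclePaths m ↔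
      ω 0 = true ∧ ω 1 = true ∧ (∀ k, 2 ≤ k → k < 2 * m + 3 → walkW ω k ≠ 1) ∧
        walkW ω (2 * m + 3) = 1 := by
  have htake2 : ((List.range (2 * m + 3)).map ω).take 2 = [ω 0, ω 1] := by
    rw [← List.map_take, List.take_range, min_eq_left (by omega)]
    rfl
  have hwalk :
      (∀ k, 2 ≤ k → k < 2 * m + 3 → lead (((List.range (2 * m + 3)).map ω).take k) ≠ 1) ↔
        ∀ k, 2 ≤ k → k < 2 * m + 3 → walkW ω k ≠ 1 :=
    forall_congr' fun k => forall_congr' fun _ => forall_congr' fun hk => by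
      rw [lead_take_map_range ω hk.le]
  rw [mem_cyclePaths, exists_cyclePath_iff, htake2, List.length_map, List.length_range, hwalk,
    ← walkW_eq_lead]
  simp only [List.cons.injEq, and_true, true_and, and_assoc]

lemma smL_eq_one_iff (ω : ℕ → Bool) : smL ω = 1 ↔ ω 0 = false := by
  cases h0 : ω 0
  · simp [smL, h0]
  cases h1 : ω 1
  · simp [smL, h0, h1]
  simp only [smL, h0, h1, Bool.true_eq_false, if_false, iff_false]
  split_ifs with hne
  · obtain ⟨hσ2, hσ⟩ := Nat.sInf_mem hne
    have hσ2' : sInf {k | 2 ≤ k ∧ walkW ω k = 1} ≠ 2 := fun h => by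
      rw [h, walkW_two h0 h1] at hσ
      exact absurd hσ (by norm_num)
    exact_mod_cast (show (sInf {k | 2 ≤ k ∧ walkW ω k = 1} + 1) / 2 ≠ 1 by omega)
  · exact ENat.top_ne_one

lemma smL_eq_add_two_iff_of_true_true {ω : ℕ → Bool} (h0 : ω 0 = true) (h1 : ω 1 = true)
    (m : ℕ) :
    smL ω = (m + 2 : ℕ) ↔
      (∀ k, 2 ≤ k → k < 2 * m + 3 → walkW ω k ≠ 1) ∧ walkW ω (2 * m + 3) = 1 := by
  simp only [smL, h0, h1, Bool.true_eq_false, if_false]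
  split_ifs with hne
  · have hleast := isLeast_csInf hne
    obtain ⟨j, hj⟩ := odd_of_walkW_eq_one hleast.1.2
    rw [Nat.cast_inj, show (sInf {k | 2 ≤ k ∧ walkW ω k = 1} + 1) / 2 = m + 2 ↔
      sInf {k | 2 ≤ k ∧ walkW ω k = 1} = 2 * m + 3 by omega]
    refine ⟨fun h => ?_, fun ⟨hne, h⟩ => hleast.unique ⟨⟨by omega, h⟩, fun k hk => ?_⟩⟩
    · rw [h] at hleast
      exact ⟨fun k hk2 hk h1 => absurd (hleast.2 ⟨hk2, h1⟩) (by omega), hleast.1.2⟩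
    · by_contra! hlt
      exact hne k hk.1 hlt hk.2
  · exact iff_of_false (ENat.top_ne_natCast _) fun h => hne ⟨_, by omega, h.2⟩

lemma smL_eq_add_two_iff (ω : ℕ → Bool) (m : ℕ) :
    smL ω = (m + 2 : ℕ) ↔
      (List.range 2).map ω = [true, false] ∧ m = 0 ∨
        (List.range (2 * m + 3)).map ω ∈ cyclePaths m := by
  have hrange : (List.range 2).map ω = [ω 0, ω 1] := rfl
  rw [map_range_mem_cyclePaths_iff, hrange]
  cases h0 : ω 0
  · rw [(smL_eq_one_iff ω).2 h0, ← Nat.cast_one, Nat.cast_inj]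
    simp
  cases h1 : ω 1
  · simp only [smL, h0, h1, Bool.true_eq_false, if_false, if_true]
    rw [← Nat.cast_two (R := ℕ∞), Nat.cast_inj]
    simp
  simpa using smL_eq_add_two_iff_of_true_true h0 h1 m

lemma List.prod_map_bool {M : Type*} [CommMonoid M] (f : Bool → M) (l : List Bool) :
    (l.map f).prod = f true ^ l.count true * f false ^ l.count false := by
  induction l with
  | nil => simp
  | cons b l ih =>
    cases b <;> simp only [List.map_cons, List.prod_cons, ih, List.count_cons_self,
      List.count_cons_of_ne, ne_eq, Bool.true_eq_false, Bool.false_eq_true, not_false_eq_true,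
      pow_succ] <;> ac_rfl

lemma setOf_map_range_eq {α : Type*} (l : List α) :
    {ω : ℕ → α | (List.range l.length).map ω = l} =
      {ω | ∀ i : Fin l.length, ω i = l[(i : ℕ)]} := by
  ext ω
  simp [List.ext_getElem_iff, Fin.forall_iff]

section Cylinder

variable {α : Type*} [MeasurableSpace α] {μ : Measure (ℕ → α)}
  {f : α → ℝ≥0∞}

lemma measurableSet_map_range_eq [MeasurableSingletonClass α] (l : List α) :
    MeasurableSet {ω : ℕ → α | (List.range l.length).map ω = l} := by
  rw [setOf_map_range_eq, Set.ofPred_forall]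
  exact MeasurableSet.iInter fun i => measurable_pi_apply (i : ℕ) (measurableSet_singleton _)

variable (hμ : ∀ (n : ℕ) (w : Fin n → α), μ {ω | ∀ i : Fin n, ω i = w i} = ∏ i, f (w i))
include hμ

lemma measure_map_range_eq (l : List α) :
    μ {ω | (List.range l.length).map ω = l} = (l.map f).prod := by
  rw [setOf_map_range_eq, hμ, Fin.prod_univ_fun_getElem]

lemma measure_map_range_mem [MeasurableSingletonClass α] {n : ℕ} (T : Finset (List α))
    (hT : ∀ l ∈ T, l.length = n) :
    μ {ω | (List.range n).map ω ∈ T} = ∑ l ∈ T, (l.map f).prod := by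
  have hfiber : ∀ l ∈ T, {ω : ℕ → α | (List.range n).map ω = l} =
      {ω | (List.range l.length).map ω = l} := fun l hl => by rw [hT l hl]
  have hunion : {ω | (List.range n).map ω ∈ T} = ⋃ l ∈ T, {ω | (List.range n).map ω = l} := by
    ext ω; simp
  rw [hunion, measure_biUnion_finset]
  · exact Finset.sum_congr rfl fun l hl => by rw [hfiber l hl, measure_map_range_eq hμ]
  · exact fun l _ l' _ hne => Set.disjoint_left.2 fun ω h h' => hne (h.symm.trans h')
  · exact fun l hl => hfiber l hl ▸ measurableSet_map_range_eq l

end Cylinder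

section Bernoulli

variable {μ : Measure (ℕ → Bool)} {f : Bool → ℝ≥0∞}
  (hμ : ∀ (n : ℕ) (w : Fin n → Bool), μ {ω | ∀ i : Fin n, ω i = w i} = ∏ i, f (w i))
include hμ

lemma measure_cyclePaths (m : ℕ) :
    μ {ω | (List.range (2 * m + 3)).map ω ∈ cyclePaths m} =
      catalan m * (f true ^ (m + 2) * f false ^ (m + 1)) := by
  rw [measure_map_range_mem hμ _ fun s hs => (mem_cyclePaths.1 hs).1, Finset.sum_congr rfl,
    Finset.sum_const, card_cyclePaths, nsmul_eq_mul]
  intro s hs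
  obtain ⟨d, hd, rfl⟩ : ∃ d : DyckWord, d.semilength = m ∧ cyclePath d = s := by
    simpa [cyclePaths] using hs
  rw [List.prod_map_bool, count_true_cyclePath, count_false_cyclePath, hd]

lemma measure_smL_eq_one : μ {ω | smL ω = 1} = f false := by
  have hL1 : {ω | smL ω = 1} = {ω | (List.range [false].length).map ω = [false]} := by
    ext ω
    simp [smL_eq_one_iff]
  rw [hL1, measure_map_range_eq hμ]
  simp

lemma measure_smL_eq_two : μ {ω | smL ω = 2} = f true * f false + f true ^ 2 * f false := by
  have hL2 : {ω | smL ω = 2} = {ω | (List.range [true, false].length).map ω = [true, false]} ∪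
      {ω | (List.range (2 * 0 + 3)).map ω ∈ cyclePaths 0} := by
    ext ω
    simpa using smL_eq_add_two_iff ω 0
  have hdisj : Disjoint {ω | (List.range [true, false].length).map ω = [true, false]}
      {ω | (List.range (2 * 0 + 3)).map ω ∈ cyclePaths 0} :=
    Set.disjoint_left.2 fun ω h h' => by
      have h1 : ω 1 = true := ((map_range_mem_cyclePaths_iff ω 0).1 h').2.1
      have h01 : [ω 0, ω 1] = [true, false] := h
      simp [h1] at h01
  rw [hL2, measure_union' hdisj (measurableSet_map_range_eq _), measure_map_range_eq hμ,
    measure_cyclePaths hμ]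
  simp

lemma measure_smL_eq_add_two {m : ℕ} (hm : m ≠ 0) :
    μ {ω | smL ω = (m + 2 : ℕ)} = catalan m * (f true ^ (m + 2) * f false ^ (m + 1)) := by
  have hLn : {ω | smL ω = (m + 2 : ℕ)} = {ω | (List.range (2 * m + 3)).map ω ∈ cyclePaths m} := by
    ext ω
    simpa [hm] using smL_eq_add_two_iff ω m
  rw [hLn, measure_cyclePaths hμ]

end Bernoulli

lemma catalanC_eq_catalan (m : ℕ) : catalanC m = catalan m := by
  have h : (((m + 1) * catalan m : ℕ) : ℝ) = (2 * m).choose m := by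
    rw [succ_mul_catalan_eq_centralBinom, Nat.centralBinom_eq_two_mul_choose]
  rw [Nat.cast_choose ℝ (by omega), show 2 * m - m = m by omega] at h
  rw [_root_.eq_div_iff (by positivity)] at h
  unfold catalanC
  rw [Nat.factorial_succ, div_eq_iff (by positivity), ← h]
  push_cast
  ring

theorem smL_distribution_general (q p : ℝ) (hq0 : 0 < q) (hq : q < 1 / 2) (hp : p = 1 - q)
    (μ : Measure (ℕ → Bool))
    (hμ : ∀ (n : ℕ) (w : Fin n → Bool),
      μ {ω | ∀ i : Fin n, ω i = w i} =
        ∏ i : Fin n, (if w i then ENNReal.ofReal q else ENNReal.ofReal p)) :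
    μ {ω | smL ω = 1} = ENNReal.ofReal p ∧
    μ {ω | smL ω = 2} = ENNReal.ofReal (p * q + p * q ^ 2) ∧
    ∀ n : ℕ, 3 ≤ n →
      μ {ω | smL ω = (n : ℕ∞)} =
        ENNReal.ofReal (p ^ (n - 1) * q ^ n * catalanC (n - 2)) := by
  have hp0 : 0 ≤ p := by linarith
  set f : Bool → ℝ≥0∞ := fun b => if b then ENNReal.ofReal q else ENNReal.ofReal p
  replace hμ : ∀ (n : ℕ) (w : Fin n → Bool), μ {ω | ∀ i : Fin n, ω i = w i} = ∏ i, f (w i) := hμ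
  refine ⟨measure_smL_eq_one hμ, ?_, fun n hn => ?_⟩
  · rw [measure_smL_eq_two hμ, show p * q + p * q ^ 2 = q * p + q ^ 2 * p by ring,
      ENNReal.ofReal_add (by positivity) (by positivity), ENNReal.ofReal_mul hq0.le,
      ENNReal.ofReal_mul (by positivity), ENNReal.ofReal_pow hq0.le]
    rfl
  · obtain ⟨m, rfl⟩ : ∃ m, n = m + 2 := ⟨n - 2, by omega⟩
    rw [measure_smL_eq_add_two hμ (by omega), Nat.add_sub_cancel, Nat.add_sub_assoc (by norm_num),
      catalanC_eq_catalan, show p ^ (m + 1) * q ^ (m + 2) * catalan m =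
        catalan m * (q ^ (m + 2) * p ^ (m + 1)) by ring,
      ENNReal.ofReal_mul (by positivity), ENNReal.ofReal_natCast,
      ENNReal.ofReal_mul (by positivity), ENNReal.ofReal_pow hq0.le, ENNReal.ofReal_pow hp0]
    rfl

/-- Distribution of the selfish-mining cycle length: `μ(L = 1) = p`,
`μ(L = 2) = pq + pq²`, and for `n ≥ 3`, `μ(L = n) = p^(n-1) q^n C_(n-2)`. -/
theorem smL_distribution (q p : ℝ) (hq0 : 0 < q) (hq : q < 1 / 2) (hp : p = 1 - q)
    (μ : Measure (ℕ → Bool)) [IsProbabilityMeasure μ]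
    (hμ : ∀ (n : ℕ) (w : Fin n → Bool),
      μ {ω | ∀ i : Fin n, ω i = w i} =
        ∏ i : Fin n, (if w i then ENNReal.ofReal q else ENNReal.ofReal p)) :
    μ {ω | smL ω = 1} = ENNReal.ofReal p ∧
    μ {ω | smL ω = 2} = ENNReal.ofReal (p * q + p * q ^ 2) ∧
    ∀ n : ℕ, 3 ≤ n →
      μ {ω | smL ω = (n : ℕ∞)} =
        ENNReal.ofReal (p ^ (n - 1) * q ^ n * catalanC (n - 2)) :=
  smL_distribution_general q p hq0 hq hp μ hμ
end

section
/- With the Bernoulli-sequence model, define the Lead Stubborn Mining cycle length L by: L = 1 if X_0 = H, and otherwise L = ρ/2 + 1 where ρ = inf{k ≥ 1 : W_k = 0} is the first return time of the walk to 0. Then μ(L = 1) = p and for every integer n ≥ 1, μ(L = n+1) = (pq)^n·C_{n−1}, where C_m = (2m)!/(m!·(m+1)!) is the m-th Catalan number. -/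
open MeasureTheory ENNReal
open scoped BigOperators Classical

/-- The Lead Stubborn Mining cycle length: `L = 1` if `X_0 = H`, and otherwise
`L = ρ/2 + 1` where `ρ = inf {k ≥ 1 : W_k = 0}` is the first return time of the walk
to `0` (with `L = ∞` if the walk never returns to `0`). -/
noncomputable def lsmL (ω : ℕ → Bool) : ℕ∞ :=
  if ω 0 = false then 1
  else if _h : {k : ℕ | 1 ≤ k ∧ walkW ω k = 0}.Nonempty then
    ((sInf {k : ℕ | 1 ≤ k ∧ walkW ω k = 0} / 2 + 1 : ℕ) : ℕ∞)
  else ⊤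

lemma count_add_count (l : List Bool) : l.count true + l.count false = l.length := by
  induction l with
  | nil => simp
  | cons a t ih => cases a <;> simp [List.count_cons, ih] <;> omega

lemma filter_card_eq_count (ω : ℕ → Bool) (b : Bool) (k : ℕ) :
    ((Finset.range k).filter fun i => ω i = b).card = ((List.range k).map ω).count b := by
  induction k with
  | zero => simp
  | succ k ih =>
    rw [List.range_succ, List.map_append, List.count_append, Finset.range_add_one,
      Finset.filter_insert]
    by_cases h : ω k = b
    · rw [if_pos h, Finset.card_insert_of_notMem (by simp), ih]
      simp [h]
    · rw [if_neg h, ih]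
      simp [List.count_singleton', h]

lemma walkW_eq_counts (ω : ℕ → Bool) (k : ℕ) :
    walkW ω k = (((List.range k).map ω).count true : ℤ) - ((List.range k).map ω).count false := by
  rw [walkW, filter_card_eq_count, filter_card_eq_count]

lemma walkW_congr {ω ω' : ℕ → Bool} {k : ℕ} (h : ∀ i < k, ω i = ω' i) :
    walkW ω k = walkW ω' k := by
  rw [walkW_eq_counts, walkW_eq_counts]
  have : (List.range k).map ω = (List.range k).map ω' :=
    List.map_congr_left fun i hi => h i (List.mem_range.mp hi)
  rw [this]

lemma two_mul_walkW (ω : ℕ → Bool) (k : ℕ) :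
    walkW ω k = 2 * (((List.range k).map ω).count true : ℤ) - k := by
  rw [walkW_eq_counts]
  have := count_add_count ((List.range k).map ω)
  have hl : ((List.range k).map ω).length = k := by simp
  omega

/-- Extend a list to a function `ℕ → Bool` by `false`. -/
def lext (l : List Bool) : ℕ → Bool := fun i => l.getD i false

lemma range_map_lext (l : List Bool) {k : ℕ} (hk : k ≤ l.length) :
    (List.range k).map (lext l) = l.take k := by
  apply List.ext_getElem
  · simp [hk]
  · intro i h1 h2
    simp only [List.getElem_map, List.getElem_range, List.getElem_take]
    rw [List.length_map, List.length_range] at h1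
    simp [lext, List.getD_eq_getElem?_getD, List.getElem?_eq_getElem (lt_of_lt_of_le h1 hk)]

lemma walkW_lext (l : List Bool) {k : ℕ} (hk : k ≤ l.length) :
    walkW (lext l) k = ((l.take k).count true : ℤ) - (l.take k).count false := by
  rw [walkW_eq_counts, range_map_lext l hk]

open DyckStep in
/-- Convert a boolean to a Dyck step. -/
def boolToStep (b : Bool) : DyckStep := if b then U else D

open DyckStep in
/-- Convert a Dyck step to a boolean. -/
def stepToBool : DyckStep → Bool
  | U => true
  | D => false

@[simp] lemma stepToBool_boolToStep (b : Bool) : stepToBool (boolToStep b) = b := by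
  cases b <;> rfl

@[simp] lemma boolToStep_stepToBool (s : DyckStep) : boolToStep (stepToBool s) = s := by
  cases s <;> rfl

lemma map_bs_sb (L : List DyckStep) : (L.map stepToBool).map boolToStep = L := by
  induction L with
  | nil => rfl
  | cons a t ih => simp [ih]

lemma map_sb_bs (L : List Bool) : (L.map boolToStep).map stepToBool = L := by
  induction L with
  | nil => rfl
  | cons a t ih => simp [ih]

open DyckStep in
lemma count_map_boolToStep (m : List Bool) :
    (m.map boolToStep).count U = m.count true ∧ (m.map boolToStep).count D = m.count false := by
  induction m with
  | nil => simp
  | cons a t ih => cases a <;> simp [boolToStep, List.count_cons, ih.1, ih.2]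

/-- A "first-return word" of semilength `n`. -/
def FRL (n : ℕ) (l : List Bool) : Prop :=
  l.length = 2 * n ∧ lext l 0 = true ∧ l.count true = l.count false ∧
    ∀ k, 1 ≤ k → k < 2 * n → (l.take k).count true ≠ (l.take k).count false

lemma FRL.strict {n : ℕ} {l : List Bool} (h : FRL n l) :
    ∀ k, 1 ≤ k → k < 2 * n → (l.take k).count false < (l.take k).count true := by
  obtain ⟨hlen, hhead, hcnt, hne⟩ := h
  intro k hk1 hk2
  induction k with
  | zero => omega
  | succ k ih =>
    rcases Nat.eq_or_lt_of_le hk1 with h1 | h1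
    · -- k + 1 = 1
      obtain ⟨a, t, rfl⟩ : ∃ a t, l = a :: t := by
        cases l with
        | nil => simp at hlen; omega
        | cons a t => exact ⟨a, t, rfl⟩
      have ha : a = true := by simpa [lext] using hhead
      simp [← h1, ha]
    · have hk : 1 ≤ k := by omega
      have ihk := ih hk (by omega)
      have hne' := hne (k + 1) hk1 hk2
      have htk : l.take (k + 1) = l.take k ++ [l.get ⟨k, by omega⟩] := by
        rw [List.take_succ]
        simp [List.getElem?_eq_getElem (show k < l.length by omega), List.get_eq_getElem]
      rw [htk] at hne' ⊢
      cases hv : l.get ⟨k, by omega⟩ <;>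
        simp only [hv, List.count_append, List.count_singleton', List.count_nil] at hne' ⊢ <;>
        simp at hne' ⊢ <;> omega

lemma FRL.decomp {n : ℕ} {l : List Bool} (hn : 1 ≤ n) (h : FRL n l) :
    ∃ m : List Bool, l = true :: (m ++ [false]) ∧ m.length = 2 * (n - 1) ∧
      m.count true = m.count false ∧
      ∀ i, (m.take i).count false ≤ (m.take i).count true := by
  obtain ⟨hlen, hhead, hcnt, hne⟩ := h
  have hstrict := FRL.strict ⟨hlen, hhead, hcnt, hne⟩
  have hcn : l.count true = n ∧ l.count false = n := by
    have := count_add_count l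
    omega
  -- last element is false
  have hlnil : l ≠ [] := by intro hl; rw [hl] at hlen; simp at hlen; omega
  have hlast : l.getLast hlnil = false := by
    by_contra hf
    have hf' : l.getLast hlnil = true := by
      cases hv : l.getLast hlnil
      · exact absurd hv hf
      · rfl
    have hdec : l = l.take (2 * n - 1) ++ [l.getLast hlnil] := by
      conv_lhs => rw [← List.dropLast_append_getLast hlnil]
      rw [List.dropLast_eq_take, hlen]
    have hst := hstrict (2 * n - 1) (by omega) (by omega)
    have htl : (l.take (2 * n - 1)).length = 2 * n - 1 := by
      rw [List.length_take, hlen]; omega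
    have hsum := count_add_count (l.take (2 * n - 1))
    have hcT : l.count true = (l.take (2 * n - 1)).count true + 1 := by
      conv_lhs => rw [hdec]
      simp [hf']
    have hcF : l.count false = (l.take (2 * n - 1)).count false := by
      conv_lhs => rw [hdec]
      simp [hf']
    omega
  -- split off head
  obtain ⟨a, t, rfl⟩ : ∃ a t, l = a :: t := by
    cases l with
    | nil => exact absurd rfl hlnil
    | cons a t => exact ⟨a, t, rfl⟩
  have ha : a = true := by simpa [lext] using hhead
  subst ha
  have htnil : t ≠ [] := by
    intro ht; rw [ht] at hlen; simp at hlen; omega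
  obtain ⟨m, rfl⟩ : ∃ m, t = m ++ [false] := by
    refine ⟨t.dropLast, ?_⟩
    have : t.getLast htnil = false := by
      rw [← hlast]
      exact (List.getLast_cons htnil).symm
    conv_lhs => rw [← List.dropLast_append_getLast htnil, this]
  refine ⟨m, rfl, ?_, ?_, ?_⟩
  · simp at hlen; omega
  · simp [List.count_cons, List.count_append] at hcn
    omega
  · intro i
    by_cases hi : i ≤ m.length
    · have hm2 : m.length = 2 * n - 2 := by simp at hlen; omega
      have := hstrict (i + 1) (by omega) (by omega)
      rw [List.take_succ_cons, List.take_append_of_le_length hi] at this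
      simp [List.count_cons] at this
      omega
    · rw [List.take_of_length_le (by omega)]
      have := hstrict (m.length + 1) (by omega) (by simp at hlen ⊢; omega)
      rw [List.take_succ_cons, List.take_append_of_le_length le_rfl,
        List.take_of_length_le le_rfl] at this
      simp [List.count_cons] at this
      omega

lemma FRL.comp {n : ℕ} (hn : 1 ≤ n) {m : List Bool} (hlen : m.length = 2 * (n - 1))
    (hc : m.count true = m.count false)
    (hp : ∀ i, (m.take i).count false ≤ (m.take i).count true) :
    FRL n (true :: (m ++ [false])) := by
  have hl2 : (true :: (m ++ [false])).length = 2 * n := by simp; omega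
  refine ⟨hl2, rfl, ?_, ?_⟩
  · simp [List.count_cons, List.count_append]
    omega
  · intro k hk1 hk2
    obtain ⟨j, rfl⟩ : ∃ j, k = j + 1 := ⟨k - 1, by omega⟩
    have hj : j ≤ m.length := by omega
    rw [List.take_succ_cons, List.take_append_of_le_length hj]
    have := hp j
    simp [List.count_cons]
    omega

def midList (l : List Bool) : List Bool := (l.drop 1).dropLast

lemma midList_eq (m : List Bool) : midList (true :: (m ++ [false])) = m := by
  simp [midList]

lemma ofFn_lext (L : List Bool) {N : ℕ} (hL : L.length = N) :
    List.ofFn (fun i : Fin N => lext L i.val) = L := by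
  apply List.ext_getElem
  · simp [hL]
  · intro i h1 h2
    simp only [List.getElem_ofFn]
    simp [lext, List.getD_eq_getElem?_getD, List.getElem?_eq_getElem h2]

open DyckStep in
lemma card_FR (n : ℕ) (hn : 1 ≤ n) :
    (Finset.univ.filter fun w : Fin (2 * n) → Bool => FRL n (List.ofFn w)).card
      = catalan (n - 1) := by
  rw [← DyckWord.card_dyckWord_semilength_eq_catalan,
    ← Finset.card_univ (α := { p : DyckWord // p.semilength = n - 1 })]
  refine Finset.card_bij'
    (fun w hw =>
      ⟨⟨(midList (List.ofFn w)).map boolToStep, by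
        obtain ⟨m, hm, hml, hmc, hmp⟩ := FRL.decomp hn (Finset.mem_filter.mp hw).2
        rw [hm, midList_eq, (count_map_boolToStep m).1, (count_map_boolToStep m).2, hmc], by
        intro i
        obtain ⟨m, hm, hml, hmc, hmp⟩ := FRL.decomp hn (Finset.mem_filter.mp hw).2
        rw [hm, midList_eq, ← List.map_take, (count_map_boolToStep (m.take i)).1,
          (count_map_boolToStep (m.take i)).2]
        exact hmp i⟩, by
        obtain ⟨m, hm, hml, hmc, hmp⟩ := FRL.decomp hn (Finset.mem_filter.mp hw).2
        have hcc := count_add_count m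
        show ((midList (List.ofFn w)).map boolToStep).count U = n - 1
        rw [hm, midList_eq, (count_map_boolToStep m).1]
        omega⟩)
    (fun x _ => fun i : Fin (2 * n) =>
      lext (true :: ((x.1.toList.map stepToBool) ++ [false])) i.val)
    (fun w hw => Finset.mem_univ _) ?_ ?_ ?_
  · -- j maps into s
    intro x hx
    rw [Finset.mem_filter]
    refine ⟨Finset.mem_univ _, ?_⟩
    set m : List Bool := x.1.toList.map stepToBool with hmdef
    have hml : m.length = 2 * (n - 1) := by
      rw [hmdef, List.length_map, ← DyckWord.two_mul_semilength_eq_length, x.2]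
    have hrec : m.map boolToStep = x.1.toList := by
      rw [hmdef]
      exact map_bs_sb _
    have hofn : List.ofFn (fun i : Fin (2 * n) =>
        lext (true :: (m ++ [false])) i.val) = true :: (m ++ [false]) := by
      apply ofFn_lext
      simp [hml]; omega
    rw [hofn]
    apply FRL.comp hn hml
    · have h1 := (count_map_boolToStep m).1
      have h2 := (count_map_boolToStep m).2
      rw [hrec] at h1 h2
      rw [← h1, ← h2]
      exact x.1.count_U_eq_count_D
    · intro i
      have h1 := (count_map_boolToStep (m.take i)).1
      have h2 := (count_map_boolToStep (m.take i)).2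
      rw [List.map_take, hrec] at h1 h2
      rw [← h1, ← h2]
      exact x.1.count_D_le_count_U i
  · -- left inverse
    intro w hw
    obtain ⟨m, hm, hml, hmc, hmp⟩ := FRL.decomp hn (Finset.mem_filter.mp hw).2
    funext i
    show lext (true :: ((((midList (List.ofFn w)).map boolToStep).map stepToBool)
      ++ [false])) i.val = w i
    rw [hm, midList_eq, map_sb_bs, ← hm]
    have : lext (List.ofFn w) i.val = w i := by
      simp [lext, List.getD_eq_getElem?_getD,
        List.getElem?_eq_getElem (show i.val < (List.ofFn w).length by simp)]
    simpa using this
  · -- right inverse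
    intro x hx
    apply Subtype.ext
    apply DyckWord.ext
    show ((midList (List.ofFn fun i : Fin (2 * n) =>
      lext (true :: ((x.1.toList.map stepToBool) ++ [false])) i.val)).map boolToStep) = _
    set m : List Bool := x.1.toList.map stepToBool with hmdef
    have hofn : List.ofFn (fun i : Fin (2 * n) =>
        lext (true :: (m ++ [false])) i.val) = true :: (m ++ [false]) := by
      apply ofFn_lext
      have hml : m.length = 2 * (n - 1) := by
        rw [hmdef, List.length_map, ← DyckWord.two_mul_semilength_eq_length, x.2]
      simp [hml]; omega
    rw [hofn, midList_eq, hmdef]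
    exact map_bs_sb _

lemma catalanC_eq (m : ℕ) : (catalan m : ℝ) = catalanC m := by
  have h1 : (catalan m : ℝ) = (m.centralBinom : ℝ) / (m + 1) := by
    rw [catalan_eq_centralBinom_div]
    rw [Nat.cast_div m.succ_dvd_centralBinom (by positivity)]
    norm_num
  have h2 : (m.centralBinom : ℝ) = (Nat.factorial (2 * m) : ℝ) /
      ((Nat.factorial m : ℝ) * (Nat.factorial m : ℝ)) := by
    have key : m.centralBinom * m.factorial * m.factorial = (2 * m).factorial := by
      have h := Nat.choose_mul_factorial_mul_factorial (show m ≤ 2 * m by omega)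
      rw [show 2 * m - m = m from by omega] at h
      simpa [Nat.centralBinom] using h
    have key' : (m.centralBinom : ℝ) * m.factorial * m.factorial = (2 * m).factorial := by
      exact_mod_cast congrArg (Nat.cast (R := ℝ)) key
    rw [_root_.eq_div_iff (by positivity)]
    linarith [key']
  rw [h1, h2, catalanC]
  have hf : (Nat.factorial (m + 1) : ℝ) = (m + 1) * Nat.factorial m := by
    rw [Nat.factorial_succ]; push_cast; ring
  rw [hf]
  rw [div_div]
  congr 1
  ring

lemma walkW_even {ω : ℕ → Bool} {k : ℕ} (h : walkW ω k = 0) : k = 2 * (k / 2) := by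
  have h2 := two_mul_walkW ω k
  rw [h] at h2
  omega

lemma lsmL_eq_one_iff (ω : ℕ → Bool) : lsmL ω = 1 ↔ ω 0 = false := by
  constructor
  · intro h
    by_contra hf
    rw [lsmL, if_neg hf] at h
    split at h
    · rename_i hne
      have hm := Nat.sInf_mem hne
      set m := sInf {k : ℕ | 1 ≤ k ∧ walkW ω k = 0} with hmdef
      obtain ⟨hm1, hm0⟩ := hm
      have : (m / 2 + 1 : ℕ) = (1 : ℕ) := by
        have : ((m / 2 + 1 : ℕ) : ℕ∞) = ((1 : ℕ) : ℕ∞) := by exact_mod_cast h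
        exact_mod_cast this
      have hme := walkW_even hm0
      have hm2 : m = 0 := by omega
      omega
    · exact absurd h (by simp)
  · intro h
    rw [lsmL, if_pos h]

lemma lsmL_eq_succ_iff {n : ℕ} (hn : 1 ≤ n) (ω : ℕ → Bool) :
    lsmL ω = ((n + 1 : ℕ) : ℕ∞) ↔
      (ω 0 = true ∧ walkW ω (2 * n) = 0 ∧ ∀ k, 1 ≤ k → k < 2 * n → walkW ω k ≠ 0) := by
  constructor
  · intro h
    have hω : ω 0 = true := by
      by_contra hf
      have : ω 0 = false := by cases hv : ω 0 <;> simp_all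
      rw [lsmL, if_pos this] at h
      have : (1 : ℕ) = n + 1 := by exact_mod_cast h
      omega
    rw [lsmL, if_neg (by simp [hω])] at h
    split at h
    · rename_i hne
      have hm := Nat.sInf_mem hne
      set m := sInf {k : ℕ | 1 ≤ k ∧ walkW ω k = 0} with hmdef
      obtain ⟨hm1, hm0⟩ := hm
      have hdiv : (m / 2 + 1 : ℕ) = n + 1 := by exact_mod_cast h
      have hme := walkW_even hm0
      have hm2n : m = 2 * n := by omega
      refine ⟨hω, by rwa [hm2n] at hm0, ?_⟩
      intro k hk1 hk2 hk0
      have : m ≤ k := Nat.sInf_le ⟨hk1, hk0⟩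
      omega
    · exact absurd h.symm (WithTop.natCast_ne_top _)
  · rintro ⟨hω, h0, hne⟩
    have hmem : (2 * n) ∈ {k : ℕ | 1 ≤ k ∧ walkW ω k = 0} := ⟨by omega, h0⟩
    have hnon : {k : ℕ | 1 ≤ k ∧ walkW ω k = 0}.Nonempty := ⟨2 * n, hmem⟩
    rw [lsmL, if_neg (by simp [hω]), dif_pos hnon]
    have hinf : sInf {k : ℕ | 1 ≤ k ∧ walkW ω k = 0} = 2 * n := by
      refine le_antisymm (Nat.sInf_le hmem) ?_
      by_contra hf
      push_neg at hf
      have hm := Nat.sInf_mem hnon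
      exact hne _ hm.1 hf hm.2
    rw [hinf]
    norm_num

lemma card_filter_eq_count {N : ℕ} (w : Fin N → Bool) (b : Bool) :
    (Finset.univ.filter fun i => w i = b).card = (List.ofFn w).count b := by
  have h1 : ((Finset.range N).filter fun k => lext (List.ofFn w) k = b).card
      = (List.ofFn w).count b := by
    rw [filter_card_eq_count, range_map_lext _ (by simp), List.take_of_length_le (by simp)]
  rw [← h1]
  apply Finset.card_bij (fun (i : Fin N) _ => i.val)
  · intro i hi
    rw [Finset.mem_filter] at hi ⊢
    refine ⟨Finset.mem_range.mpr i.isLt, ?_⟩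
    have : lext (List.ofFn w) i.val = w i := by
      simp [lext, List.getD_eq_getElem?_getD,
        List.getElem?_eq_getElem (show i.val < (List.ofFn w).length by simp)]
    rw [this]
    exact hi.2
  · intro i _ j _ hij
    exact Fin.ext hij
  · intro k hk
    rw [Finset.mem_filter, Finset.mem_range] at hk
    refine ⟨⟨k, hk.1⟩, ?_, rfl⟩
    rw [Finset.mem_filter]
    refine ⟨Finset.mem_univ _, ?_⟩
    have : lext (List.ofFn w) k = w ⟨k, hk.1⟩ := by
      simp [lext, List.getD_eq_getElem?_getD,
        List.getElem?_eq_getElem (show k < (List.ofFn w).length by simpa using hk.1)]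
    rw [← this]
    exact hk.2

lemma FRL_ofFn_iff {n : ℕ} (hn : 1 ≤ n) (ω : ℕ → Bool) :
    FRL n (List.ofFn fun i : Fin (2 * n) => ω i.val) ↔
      (ω 0 = true ∧ walkW ω (2 * n) = 0 ∧ ∀ k, 1 ≤ k → k < 2 * n → walkW ω k ≠ 0) := by
  set l := List.ofFn fun i : Fin (2 * n) => ω i.val with hl
  have hlen : l.length = 2 * n := by simp [hl]
  have hag : ∀ i < 2 * n, lext l i = ω i := by
    intro i hi
    simp [hl, lext, List.getD_eq_getElem?_getD, hi,
      List.getElem?_eq_getElem (show i < l.length by omega)]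
  have hwk : ∀ k, k ≤ 2 * n →
      walkW ω k = ((l.take k).count true : ℤ) - (l.take k).count false := by
    intro k hk
    rw [← walkW_lext l (by omega)]
    exact walkW_congr fun i hi => (hag i (by omega)).symm
  have htake : l.take (2 * n) = l := List.take_of_length_le (by omega)
  constructor
  · rintro ⟨_, hhead, hcnt, hne⟩
    refine ⟨?_, ?_, ?_⟩
    · rw [← hag 0 (by omega)]; exact hhead
    · rw [hwk (2 * n) le_rfl, htake]
      omega
    · intro k hk1 hk2 h0
      rw [hwk k (by omega)] at h0
      exact hne k hk1 hk2 (by omega)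
  · rintro ⟨hhead, h0, hne⟩
    rw [hwk (2 * n) le_rfl, htake] at h0
    refine ⟨hlen, ?_, by omega, ?_⟩
    · rw [hag 0 (by omega)]; exact hhead
    · intro k hk1 hk2 hc
      exact hne k hk1 hk2 (by rw [hwk k (by omega)]; omega)

lemma cylinder_measurable {N : ℕ} (w : Fin N → Bool) :
    MeasurableSet {ω : ℕ → Bool | ∀ i : Fin N, ω i = w i} := by
  have : {ω : ℕ → Bool | ∀ i : Fin N, ω i = w i}
      = ⋂ i : Fin N, (fun ω : ℕ → Bool => ω i.val) ⁻¹' {w i} := by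
    ext ω; simp [Set.mem_iInter]
  rw [this]
  exact MeasurableSet.iInter fun i => (measurable_pi_apply _) (measurableSet_singleton _)

/-- Distribution of the Lead Stubborn Mining cycle length: `μ(L = 1) = p` and for
`n ≥ 1`, `μ(L = n+1) = (pq)^n C_(n-1)`. -/
theorem lsmL_distribution (q p : ℝ) (hq0 : 0 < q) (hq : q < 1 / 2) (hp : p = 1 - q)
    (μ : Measure (ℕ → Bool)) [IsProbabilityMeasure μ]
    (hμ : ∀ (n : ℕ) (w : Fin n → Bool),
      μ {ω | ∀ i : Fin n, ω i = w i} =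
        ∏ i : Fin n, (if w i then ENNReal.ofReal q else ENNReal.ofReal p)) :
    μ {ω | lsmL ω = 1} = ENNReal.ofReal p ∧
    ∀ n : ℕ, 1 ≤ n →
      μ {ω | lsmL ω = ((n + 1 : ℕ) : ℕ∞)} =
        ENNReal.ofReal ((p * q) ^ n * catalanC (n - 1)) := by
  have hp0 : 0 ≤ p := by rw [hp]; linarith
  constructor
  · have hset : {ω : ℕ → Bool | lsmL ω = 1}
        = {ω : ℕ → Bool | ∀ i : Fin 1, ω i = (fun _ : Fin 1 => false) i} := by
      ext ω
      rw [Set.mem_setOf_eq, lsmL_eq_one_iff]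
      constructor
      · intro h i
        have : (i : ℕ) = 0 := by omega
        rw [this]; exact h
      · intro h
        have := h 0
        simpa using this
    rw [hset, hμ 1 (fun _ => false)]
    simp
  · intro n hn
    set N := 2 * n with hN
    set D : Finset (Fin N → Bool) :=
      Finset.univ.filter (fun w : Fin N → Bool => FRL n (List.ofFn w)) with hD
    have hset : {ω : ℕ → Bool | lsmL ω = ((n + 1 : ℕ) : ℕ∞)}
        = ⋃ w ∈ D, {ω : ℕ → Bool | ∀ i : Fin N, ω i = w i} := by
      ext ω
      simp only [Set.mem_setOf_eq, Set.mem_iUnion, hD, Finset.mem_filter, Finset.mem_univ,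
        true_and, exists_prop]
      rw [lsmL_eq_succ_iff hn, ← FRL_ofFn_iff hn]
      constructor
      · intro h
        exact ⟨fun i => ω i.val, h, fun i => rfl⟩
      · rintro ⟨w, hw, hww⟩
        have : (fun i : Fin N => ω i.val) = w := funext hww
        rwa [← this] at hw
    rw [hset, measure_biUnion_finset ?_ (fun w _ => cylinder_measurable w)]
    swap
    · intro w1 h1 w2 h2 hne
      simp only [Function.onFun]
      rw [Set.disjoint_left]
      intro ω hω1 hω2
      exact hne (funext fun i => (hω1 i).symm.trans (hω2 i))
    have hterm : ∀ w ∈ D, μ {ω : ℕ → Bool | ∀ i : Fin N, ω i = w i}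
        = ENNReal.ofReal q ^ n * ENNReal.ofReal p ^ n := by
      intro w hw
      have hfr : FRL n (List.ofFn w) := by
        rw [hD, Finset.mem_filter] at hw
        exact hw.2
      have hcounts : (List.ofFn w).count true = n ∧ (List.ofFn w).count false = n := by
        have h1 := hfr.2.2.1
        have h2 := count_add_count (List.ofFn w)
        have h3 : (List.ofFn w).length = 2 * n := by simp [hfr.1]
        omega
      rw [hμ N w]
      rw [← Finset.prod_filter_mul_prod_filter_not Finset.univ (fun i => w i = true)]
      have e1 : ∏ i ∈ Finset.univ.filter (fun i : Fin N => w i = true),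
          (if w i then ENNReal.ofReal q else ENNReal.ofReal p) = ENNReal.ofReal q ^ n := by
        rw [Finset.prod_congr rfl (fun i hi => by
          rw [if_pos]
          exact (Finset.mem_filter.mp hi).2)]
        rw [Finset.prod_const, card_filter_eq_count, hcounts.1]
      have e2 : ∏ i ∈ Finset.univ.filter (fun i : Fin N => ¬w i = true),
          (if w i then ENNReal.ofReal q else ENNReal.ofReal p) = ENNReal.ofReal p ^ n := by
        rw [Finset.prod_congr rfl (fun i hi => by
          rw [if_neg]
          exact (Finset.mem_filter.mp hi).2)]
        rw [Finset.prod_const]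
        have : Finset.univ.filter (fun i : Fin N => ¬w i = true)
            = Finset.univ.filter (fun i : Fin N => w i = false) := by
          apply Finset.filter_congr
          intro i _
          simp
        rw [this, card_filter_eq_count, hcounts.2]
      rw [e1, e2]
    rw [Finset.sum_congr rfl hterm, Finset.sum_const, hD, card_FR n hn]
    rw [nsmul_eq_mul]
    rw [← ENNReal.ofReal_natCast, ← ENNReal.ofReal_pow hq0.le, ← ENNReal.ofReal_pow hp0,
      ← ENNReal.ofReal_mul (by positivity), ← ENNReal.ofReal_mul (by positivity)]
    congr 1
    rw [← catalanC_eq, mul_pow]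
    ring
end
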